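/- arXiv:2102.13257 — 3 statements merged into one kernel-verified Lean document; each statement's English description precedes it below -/
import Mathlib

section
/- Let γ > 1 and g(q²) = ((γ+1−(γ−1)q²)/2)^{1/(γ−1)}. The map q ↦ (g(q²)q)² is a continuous strictly increasing bijection from [0,1] onto [0,1]. Consequently there is a unique function H : [0,1] → ℝ satisfying H((g(q²)q)²) = g(q²) for all q ∈ [0,1] (the subsonic branch of the density as a function of |∇ψ|²); this H is continuous and strictly decreasing, with H(0) = ((γ+1)/2)^{1/(γ−1)}, H(1) = 1, and H(s) > 1 for all s ∈ [0,1). -/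
/-!
In terms of `s = q²`, the map of the theorem is `q ↦ fluxSq γ (q²)` with
`fluxSq γ s = s g(s)²`, whose derivative `(γ+1)(1-s) g(s)² / (γ+1-(γ-1)s)` is positive on
`[0,1)`. So `fluxSq γ` is a continuous increasing bijection of `[0,1]` fixing both endpoints,
its inverse is continuous by compactness, and `H = g ∘ (fluxSq γ)⁻¹` is continuous and
strictly decreasing because `g` is.
-/

/-- The subsonic density–speed relation `ρ = g(q²) = ((γ+1−(γ−1)q²)/2)^{1/(γ−1)}`. -/
noncomputable def gfun (γ s : ℝ) : ℝ := ((γ + 1 - (γ - 1) * s) / 2) ^ (1 / (γ - 1))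

open Set Function

theorem IsCompact.continuousOn_image_of_leftInvOn {α β : Type*} [TopologicalSpace α]
    [TopologicalSpace β] [T2Space β] {f : α → β} {s : Set α} (hs : IsCompact s)
    (hf : ContinuousOn f s) {finv : β → α} (hleft : LeftInvOn finv f s) :
    ContinuousOn finv (f '' s) := by
  refine continuousOn_iff_isClosed.2 fun t ht => ⟨f '' (t ∩ s), ?_, ?_⟩
  · exact ((hs.inter_left ht).image_of_continuousOn (hf.mono inter_subset_right)).isClosed
  · rw [← hleft.image_inter', inter_eq_self_of_subset_left (image_mono inter_subset_right)]

theorem StrictMonoOn.strictMonoOn_image_of_leftInvOn {α β : Type*} [LinearOrder α]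
    [Preorder β] {f : α → β} {s : Set α} (hf : StrictMonoOn f s) {finv : β → α}
    (hleft : LeftInvOn finv f s) :
    StrictMonoOn finv (f '' s) := by
  rintro _ ⟨x, hx, rfl⟩ _ ⟨y, hy, rfl⟩ hxy
  rwa [hleft hx, hleft hy, ← hf.lt_iff_lt hx hy]

theorem ContinuousOn.bijOn_Icc_of_strictMonoOn {f : ℝ → ℝ} {a b : ℝ} (hab : a ≤ b)
    (hf : ContinuousOn f (Icc a b)) (hmono : StrictMonoOn f (Icc a b)) :
    BijOn f (Icc a b) (Icc (f a) (f b)) :=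
  ⟨hmono.monotoneOn.mapsTo_Icc, hmono.injOn,
    hf.surjOn_Icc (left_mem_Icc.2 hab) (right_mem_Icc.2 hab)⟩

theorem strictMonoOn_sq_Icc_zero_one : StrictMonoOn (· ^ 2 : ℝ → ℝ) (Icc 0 1) :=
  (pow_left_strictMonoOn₀ two_ne_zero).mono fun _ hx => hx.1

theorem bijOn_sq_Icc_zero_one : BijOn (· ^ 2 : ℝ → ℝ) (Icc 0 1) (Icc 0 1) := by
  simpa using (continuous_pow 2).continuousOn.bijOn_Icc_of_strictMonoOn zero_le_one
    strictMonoOn_sq_Icc_zero_one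

section Density

variable {γ : ℝ}

theorem gfun_zero : gfun γ 0 = ((γ + 1) / 2) ^ (1 / (γ - 1)) := by
  simp [gfun]

theorem gfun_one : gfun γ 1 = 1 := by
  simp [gfun]

theorem gfun_pos {s : ℝ} (hs : 0 < γ + 1 - (γ - 1) * s) : 0 < gfun γ s :=
  Real.rpow_pos_of_pos (half_pos hs) _

theorem continuous_gfun (hγ : 1 < γ) : Continuous (gfun γ) :=
  (continuous_const.sub (continuous_const.mul continuous_id)).div_const 2 |>.rpow_const
    fun _ => Or.inr (one_div_pos.2 (sub_pos.2 hγ)).le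

theorem strictAntiOn_gfun (hγ : 1 < γ) : StrictAntiOn (gfun γ) (Iic ((γ + 1) / (γ - 1))) := by
  intro a _ b hb hab
  have hγ1 : 0 < γ - 1 := sub_pos.2 hγ
  rw [mem_Iic, le_div_iff₀ hγ1] at hb
  exact Real.rpow_lt_rpow (by nlinarith) (by nlinarith) (one_div_pos.2 hγ1)

theorem hasDerivAt_gfun (hγ : 1 < γ) {s : ℝ} (hs : 0 < γ + 1 - (γ - 1) * s) :
    HasDerivAt (gfun γ) (-gfun γ s / (γ + 1 - (γ - 1) * s)) s := by
  have hbase : HasDerivAt (fun s => (γ + 1 - (γ - 1) * s) / 2) (-(γ - 1) / 2) s := by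
    simpa using ((hasDerivAt_id s).const_mul (γ - 1)).const_sub (γ + 1) |>.div_const 2
  refine (hbase.rpow_const (p := 1 / (γ - 1)) (Or.inl (by positivity))).congr_deriv ?_
  rw [Real.rpow_sub_one (by positivity), ← gfun]
  field_simp [(sub_pos.2 hγ).ne']

/-- The squared mass flux `|∇ψ|² = (ρq)²` as a function of `s = q²`. -/
noncomputable def fluxSq (γ s : ℝ) : ℝ := s * gfun γ s ^ 2

theorem fluxSq_zero : fluxSq γ 0 = 0 := by
  simp [fluxSq]

theorem fluxSq_one : fluxSq γ 1 = 1 := by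
  simp [fluxSq, gfun_one]

theorem continuous_fluxSq (hγ : 1 < γ) : Continuous (fluxSq γ) :=
  continuous_id.mul ((continuous_gfun hγ).pow 2)

theorem hasDerivAt_fluxSq (hγ : 1 < γ) {s : ℝ} (hs : 0 < γ + 1 - (γ - 1) * s) :
    HasDerivAt (fluxSq γ) ((γ + 1) * (1 - s) * gfun γ s ^ 2 / (γ + 1 - (γ - 1) * s)) s := by
  refine ((hasDerivAt_id s).mul ((hasDerivAt_gfun hγ hs).pow 2)).congr_deriv ?_
  rw [eq_div_iff hs.ne']
  field_simp
  simp only [Pi.pow_apply, id_eq]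
  ring

theorem strictMonoOn_fluxSq (hγ : 1 < γ) : StrictMonoOn (fluxSq γ) (Icc 0 1) := by
  refine strictMonoOn_of_deriv_pos (convex_Icc 0 1) (continuous_fluxSq hγ).continuousOn ?_
  rw [interior_Icc]
  rintro s ⟨-, hs1⟩
  have hbase : 0 < γ + 1 - (γ - 1) * s := by nlinarith
  rw [(hasDerivAt_fluxSq hγ hbase).deriv]
  have := gfun_pos hbase
  have : 0 < 1 - s := by linarith
  positivity

theorem bijOn_fluxSq (hγ : 1 < γ) : BijOn (fluxSq γ) (Icc 0 1) (Icc 0 1) := by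
  simpa [fluxSq_zero, fluxSq_one] using
    (continuous_fluxSq hγ).continuousOn.bijOn_Icc_of_strictMonoOn zero_le_one
      (strictMonoOn_fluxSq hγ)

/-- The subsonic branch `H` of the density as a function of `|∇ψ|²`. -/
noncomputable def subsonicDensity (γ : ℝ) : ℝ → ℝ :=
  gfun γ ∘ invFunOn (fluxSq γ) (Icc 0 1)

theorem leftInvOn_invFunOn_fluxSq (hγ : 1 < γ) :
    LeftInvOn (invFunOn (fluxSq γ) (Icc 0 1)) (fluxSq γ) (Icc 0 1) :=
  (strictMonoOn_fluxSq hγ).injOn.leftInvOn_invFunOn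

theorem subsonicDensity_fluxSq (hγ : 1 < γ) {s : ℝ} (hs : s ∈ Icc 0 1) :
    subsonicDensity γ (fluxSq γ s) = gfun γ s :=
  congrArg (gfun γ) (leftInvOn_invFunOn_fluxSq hγ hs)

theorem continuousOn_subsonicDensity (hγ : 1 < γ) :
    ContinuousOn (subsonicDensity γ) (Icc 0 1) := by
  have hinv := isCompact_Icc.continuousOn_image_of_leftInvOn
    (continuous_fluxSq hγ).continuousOn (leftInvOn_invFunOn_fluxSq hγ)
  rw [(bijOn_fluxSq hγ).image_eq] at hinv
  exact (continuous_gfun hγ).comp_continuousOn hinv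

theorem strictAntiOn_subsonicDensity (hγ : 1 < γ) :
    StrictAntiOn (subsonicDensity γ) (Icc 0 1) := by
  have hinv := (strictMonoOn_fluxSq hγ).strictMonoOn_image_of_leftInvOn
    (leftInvOn_invFunOn_fluxSq hγ)
  rw [(bijOn_fluxSq hγ).image_eq] at hinv
  have hsub : Icc (0 : ℝ) 1 ⊆ Iic ((γ + 1) / (γ - 1)) := fun s hs =>
    hs.2.trans ((one_le_div (sub_pos.2 hγ)).2 (by linarith))
  exact (strictAntiOn_gfun hγ).comp_strictMonoOn hinv
    (((bijOn_fluxSq hγ).surjOn.mapsTo_invFunOn).mono_right hsub)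

end Density

/-- For `γ > 1`, the map `q ↦ (g(q²)q)²` is a continuous strictly
increasing bijection from `[0,1]` onto `[0,1]`.  Consequently there is a unique function
`H : [0,1] → ℝ` with `H((g(q²)q)²) = g(q²)` for all `q ∈ [0,1]` (the subsonic branch of the
density as a function of `|∇ψ|²`); `H` is continuous and strictly decreasing, with
`H(0) = ((γ+1)/2)^{1/(γ−1)}`, `H(1) = 1`, and `H(s) > 1` for `s ∈ [0,1)`. -/
theorem subsonic_branch_H (γ : ℝ) (hγ : 1 < γ) :
    let k : ℝ → ℝ := fun q => (gfun γ (q ^ 2) * q) ^ 2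
    ContinuousOn k (Set.Icc 0 1) ∧
    StrictMonoOn k (Set.Icc 0 1) ∧
    Set.BijOn k (Set.Icc 0 1) (Set.Icc 0 1) ∧
    ∃ H : ℝ → ℝ,
      (∀ q ∈ Set.Icc (0 : ℝ) 1, H (k q) = gfun γ (q ^ 2)) ∧
      (∀ H' : ℝ → ℝ, (∀ q ∈ Set.Icc (0 : ℝ) 1, H' (k q) = gfun γ (q ^ 2)) →
        Set.EqOn H' H (Set.Icc 0 1)) ∧
      ContinuousOn H (Set.Icc 0 1) ∧
      StrictAntiOn H (Set.Icc 0 1) ∧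
      H 0 = ((γ + 1) / 2) ^ (1 / (γ - 1)) ∧
      H 1 = 1 ∧
      (∀ s ∈ Set.Ico (0 : ℝ) 1, 1 < H s) := by
  intro k
  have hk : k = fluxSq γ ∘ (· ^ 2) := funext fun q => by simp only [k, fluxSq, comp_apply]; ring
  have hkcont : Continuous k := hk ▸ (continuous_fluxSq hγ).comp (continuous_pow 2)
  have hkmono : StrictMonoOn k (Icc 0 1) := hk ▸ (strictMonoOn_fluxSq hγ).comp
    strictMonoOn_sq_Icc_zero_one bijOn_sq_Icc_zero_one.mapsTo
  have hkbij : BijOn k (Icc 0 1) (Icc 0 1) := hk ▸ (bijOn_fluxSq hγ).comp bijOn_sq_Icc_zero_one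
  have hH : ∀ q ∈ Icc (0 : ℝ) 1, subsonicDensity γ (k q) = gfun γ (q ^ 2) := fun q hq =>
    hk ▸ subsonicDensity_fluxSq hγ (bijOn_sq_Icc_zero_one.mapsTo hq)
  have hH0 : subsonicDensity γ 0 = gfun γ 0 := by
    simpa [fluxSq_zero] using subsonicDensity_fluxSq hγ (left_mem_Icc.2 zero_le_one)
  have hH1 : subsonicDensity γ 1 = 1 := by
    simpa [fluxSq_one, gfun_one] using subsonicDensity_fluxSq hγ (right_mem_Icc.2 zero_le_one)
  refine ⟨hkcont.continuousOn, hkmono, hkbij, subsonicDensity γ, hH, ?_,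
    continuousOn_subsonicDensity hγ, strictAntiOn_subsonicDensity hγ, hH0.trans gfun_zero,
    hH1, ?_⟩
  · rintro H' hH' s hs
    obtain ⟨q, hq, rfl⟩ := hkbij.surjOn hs
    rw [hH' q hq, hH q hq]
  · intro s hs
    simpa [hH1] using strictAntiOn_subsonicDensity hγ (Ico_subset_Icc_self hs)
      (right_mem_Icc.2 zero_le_one) hs.2
end

section
/- Let γ > 1 and let ρ_b, U₁, U₂ ∈ C¹((1,∞)) with ρ_b > 0 and U₁ > 0 solve the radially symmetric Euler system (ρ_b U₁)′ + (1/r)ρ_bU₁ = 0, U₁U₁′ + ρ_b^{γ−2}ρ_b′ − U₂²/r = 0, U₁U₂′ + U₁U₂/r = 0 on (1,∞), where p_b = ρ_b^γ/γ and c² = ρ_b^{γ−1}. Define the squared Mach numbers M₁² = U₁²/c², M₂² = U₂²/c² and M² = M₁² + M₂², and assume M₁²(r) ≠ 1 for all r. Then the following ODEs hold on (1,∞): d(M₁²)/dr = −(2(1+M₂²)+(γ−1)M²)M₁²/(r(1−M₁²)), d(M₂²)/dr = −(2(1−M₁²)+(γ−1)M²)M₂²/(r(1−M₁²)), and d(M²)/dr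 = −((γ−1)M²+2)M²/(r(1−M₁²)). -/
/-! The Euler system is linear in `(ρ_b', U₁', U₂')` and, away from the sonic line `U₁² = c²`,
can be solved for these derivatives. Substituting them into
`(U²/c²)' = (2 U U' - (γ - 1) U² ρ_b'/ρ_b) / c²` gives the ODEs for `M₁²` and `M₂²`; the one for
`M²` is their sum. -/

theorem HasDerivAt.sq_div_rpow_const {f g : ℝ → ℝ} {f' g' a x : ℝ} (hf : HasDerivAt f f' x)
    (hg : HasDerivAt g g' x) (hx : 0 < g x) :
    HasDerivAt (fun s => f s ^ 2 / g s ^ a)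
      ((2 * f x * f' - a * f x ^ 2 * (g' / g x)) / g x ^ a) x := by
  have hga : 0 < g x ^ a := Real.rpow_pos_of_pos hx a
  refine ((hf.fun_pow 2).div (hg.rpow_const (Or.inl hx.ne')) hga.ne').congr_deriv ?_
  rw [Real.rpow_sub_one hx.ne']
  field_simp
  ring

theorem radialEuler_derivs {r ρ u v ρ' u' v' csq : ℝ} (hr : r ≠ 0) (hρ : ρ ≠ 0) (hu : u ≠ 0)
    (hsonic : u ^ 2 ≠ csq)
    (hmass : (ρ' * u + ρ * u') + 1 / r * (ρ * u) = 0)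
    (hradmom : u * u' + csq / ρ * ρ' - v ^ 2 / r = 0)
    (hangmom : u * v' + u * v / r = 0) :
    ρ' / ρ = -(u ^ 2 + v ^ 2) / (r * (u ^ 2 - csq)) ∧
      u' = u * (v ^ 2 + csq) / (r * (u ^ 2 - csq)) ∧ v' = -v / r := by
  have hsonic' : u ^ 2 - csq ≠ 0 := sub_ne_zero.mpr hsonic
  have hmass' : ρ' * u * r + ρ * u' * r + ρ * u = 0 := by
    field_simp at hmass; linarith
  have hradmom' : ρ * u * u' * r + csq * ρ' * r - ρ * v ^ 2 = 0 := by
    field_simp at hradmom; linarith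
  refine ⟨?_, ?_, ?_⟩
  · rw [div_eq_div_iff hρ (mul_ne_zero hr hsonic')]
    linear_combination u * hmass' - hradmom'
  · rw [eq_div_iff (mul_ne_zero hr hsonic')]
    refine mul_left_cancel₀ hρ ?_
    linear_combination u * hradmom' - csq * hmass'
  · rw [eq_div_iff hr]
    refine mul_left_cancel₀ hu ?_
    field_simp at hangmom
    linear_combination hangmom

theorem mach_number_odes_general (γ : ℝ)
    (ρb U₁ U₂ ρb' U₁' U₂' : ℝ → ℝ)
    (hρb : ∀ r ∈ Set.Ioi (1 : ℝ), HasDerivAt ρb (ρb' r) r)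
    (hU₁ : ∀ r ∈ Set.Ioi (1 : ℝ), HasDerivAt U₁ (U₁' r) r)
    (hU₂ : ∀ r ∈ Set.Ioi (1 : ℝ), HasDerivAt U₂ (U₂' r) r)
    (hρbpos : ∀ r ∈ Set.Ioi (1 : ℝ), 0 < ρb r)
    (hU₁pos : ∀ r ∈ Set.Ioi (1 : ℝ), 0 < U₁ r)
    (hmass : ∀ r ∈ Set.Ioi (1 : ℝ),
      (ρb' r * U₁ r + ρb r * U₁' r) + (1 / r) * (ρb r * U₁ r) = 0)
    (hradmom : ∀ r ∈ Set.Ioi (1 : ℝ),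
      U₁ r * U₁' r + (ρb r) ^ (γ - 2) * ρb' r - (U₂ r) ^ 2 / r = 0)
    (hangmom : ∀ r ∈ Set.Ioi (1 : ℝ), U₁ r * U₂' r + U₁ r * U₂ r / r = 0) :
    let M₁sq : ℝ → ℝ := fun r => (U₁ r) ^ 2 / (ρb r) ^ (γ - 1)
    let M₂sq : ℝ → ℝ := fun r => (U₂ r) ^ 2 / (ρb r) ^ (γ - 1)
    let Msq : ℝ → ℝ := fun r => M₁sq r + M₂sq r
    (∀ r ∈ Set.Ioi (1 : ℝ), M₁sq r ≠ 1) →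
      ∀ r ∈ Set.Ioi (1 : ℝ),
        HasDerivAt M₁sq
          (-((2 * (1 + M₂sq r) + (γ - 1) * Msq r) * M₁sq r) / (r * (1 - M₁sq r))) r ∧
        HasDerivAt M₂sq
          (-((2 * (1 - M₁sq r) + (γ - 1) * Msq r) * M₂sq r) / (r * (1 - M₁sq r))) r ∧
        HasDerivAt Msq
          (-(((γ - 1) * Msq r + 2) * Msq r) / (r * (1 - M₁sq r))) r := by
  intro M₁sq M₂sq Msq hsonic r hr
  have hr₀ : r ≠ 0 := (zero_lt_one.trans hr).ne'
  have hρ := hρbpos r hr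
  have hc : 0 < ρb r ^ (γ - 1) := Real.rpow_pos_of_pos hρ _
  have hsonic' : U₁ r ^ 2 ≠ ρb r ^ (γ - 1) := fun h => hsonic r hr (by simp [M₁sq, h, hc.ne'])
  have hpow : ρb r ^ (γ - 2) = ρb r ^ (γ - 1) / ρb r := by
    rw [← Real.rpow_sub_one hρ.ne']; ring_nf
  obtain ⟨hρ', hU₁', hU₂'⟩ := radialEuler_derivs hr₀ hρ.ne' (hU₁pos r hr).ne' hsonic'
    (hmass r hr) (hpow ▸ hradmom r hr) (hangmom r hr)
  have h₁ : HasDerivAt M₁sq _ r := (hU₁ r hr).sq_div_rpow_const (hρb r hr) hρ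
  have h₂ : HasDerivAt M₂sq _ r := (hU₂ r hr).sq_div_rpow_const (hρb r hr) hρ
  rw [hρ', hU₁'] at h₁
  rw [hρ', hU₂'] at h₂
  refine ⟨h₁.congr_deriv ?_, h₂.congr_deriv ?_, (h₁.add h₂).congr_deriv ?_⟩
  all_goals
    simp only [Msq, M₁sq, M₂sq]
    field_simp
    ring

/-- For a positive `C¹` solution `(ρ_b, U₁, U₂)` of the radially
symmetric Euler system on `(1,∞)` (polytropic pressure `p_b = ρ_b^γ/γ`, sound speed
`c² = ρ_b^{γ−1}`), the squared Mach numbers `M₁² = U₁²/c²`, `M₂² = U₂²/c²`,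
`M² = M₁² + M₂²` satisfy, whenever `M₁² ≠ 1`,
`(M₁²)′ = −(2(1+M₂²)+(γ−1)M²)M₁²/(r(1−M₁²))`,
`(M₂²)′ = −(2(1−M₁²)+(γ−1)M²)M₂²/(r(1−M₁²))`, and
`(M²)′ = −((γ−1)M²+2)M²/(r(1−M₁²))` on `(1,∞)`. -/
theorem mach_number_odes (γ : ℝ) (hγ : 1 < γ)
    (ρb U₁ U₂ ρb' U₁' U₂' : ℝ → ℝ)
    (hρb : ∀ r ∈ Set.Ioi (1 : ℝ), HasDerivAt ρb (ρb' r) r)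
    (hU₁ : ∀ r ∈ Set.Ioi (1 : ℝ), HasDerivAt U₁ (U₁' r) r)
    (hU₂ : ∀ r ∈ Set.Ioi (1 : ℝ), HasDerivAt U₂ (U₂' r) r)
    (hρbpos : ∀ r ∈ Set.Ioi (1 : ℝ), 0 < ρb r)
    (hU₁pos : ∀ r ∈ Set.Ioi (1 : ℝ), 0 < U₁ r)
    (hmass : ∀ r ∈ Set.Ioi (1 : ℝ),
      (ρb' r * U₁ r + ρb r * U₁' r) + (1 / r) * (ρb r * U₁ r) = 0)
    (hradmom : ∀ r ∈ Set.Ioi (1 : ℝ),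
      U₁ r * U₁' r + (ρb r) ^ (γ - 2) * ρb' r - (U₂ r) ^ 2 / r = 0)
    (hangmom : ∀ r ∈ Set.Ioi (1 : ℝ), U₁ r * U₂' r + U₁ r * U₂ r / r = 0) :
    let M₁sq : ℝ → ℝ := fun r => (U₁ r) ^ 2 / (ρb r) ^ (γ - 1)
    let M₂sq : ℝ → ℝ := fun r => (U₂ r) ^ 2 / (ρb r) ^ (γ - 1)
    let Msq : ℝ → ℝ := fun r => M₁sq r + M₂sq r
    (∀ r ∈ Set.Ioi (1 : ℝ), M₁sq r ≠ 1) →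
      ∀ r ∈ Set.Ioi (1 : ℝ),
        HasDerivAt M₁sq
          (-((2 * (1 + M₂sq r) + (γ - 1) * Msq r) * M₁sq r) / (r * (1 - M₁sq r))) r ∧
        HasDerivAt M₂sq
          (-((2 * (1 - M₁sq r) + (γ - 1) * Msq r) * M₂sq r) / (r * (1 - M₁sq r))) r ∧
        HasDerivAt Msq
          (-(((γ - 1) * Msq r + 2) * Msq r) / (r * (1 - M₁sq r))) r :=
  mach_number_odes_general γ ρb U₁ U₂ ρb' U₁' U₂' hρb hU₁ hU₂ hρbpos hU₁pos hmass hradmom hangmom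
end

section
/- Let γ > 1 and let m₁, m₂ ∈ C¹([1,∞)) be nonnegative functions with m₁(r) < 1 for all r ≥ 1, satisfying the Mach number ODE system m₁′ = −(2(1+m₂)+(γ−1)(m₁+m₂))m₁/(r(1−m₁)) and m₂′ = −(2(1−m₁)+(γ−1)(m₁+m₂))m₂/(r(1−m₁)) on [1,∞). Then m := m₁+m₂ satisfies m′ = −((γ−1)m+2)m/(r(1−m₁)) ≤ 0, hence m is nonincreasing; in particular, if m₁(1)+m₂(1) < 1 (the flow is subsonic at r = 1), then m₁(r)+m₂(r) < 1 for all r ≥ 1, i.e. the flow is uniformly subsonic. -/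
/-! Adding the two equations, the cross terms `±2 m₁ m₂` cancel and the numerators sum to
`((γ - 1) m + 2) m`, which is nonnegative; the denominator `r (1 - m₁)` is positive, so `m' ≤ 0`
and `m` decreases from its value at `r = 1`. -/

open Set

theorem antitoneOn_of_hasDerivWithinAt_nonpos_of_mem {D : Set ℝ} (hD : Convex ℝ D)
    {f f' : ℝ → ℝ} (hf : ∀ x ∈ D, HasDerivWithinAt f (f' x) D x)
    (hf'₀ : ∀ x ∈ D, f' x ≤ 0) : AntitoneOn f D :=
  antitoneOn_of_hasDerivWithinAt_nonpos hD (fun x hx => (hf x hx).continuousWithinAt)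
    (fun x hx => (hf x (interior_subset hx)).mono interior_subset)
    (fun x hx => hf'₀ x (interior_subset hx))

theorem mach_rhs_add (γ a b d : ℝ) :
    -((2 * (1 + b) + (γ - 1) * (a + b)) * a) / d
      + -((2 * (1 - a) + (γ - 1) * (a + b)) * b) / d
      = -(((γ - 1) * (a + b) + 2) * (a + b)) / d := by
  rw [← add_div]
  ring_nf

theorem total_mach_rhs_nonpos {γ m d : ℝ} (hγ : 1 ≤ γ) (hm : 0 ≤ m) (hd : 0 ≤ d) :
    -(((γ - 1) * m + 2) * m) / d ≤ 0 := by
  have hnum : 0 ≤ ((γ - 1) * m + 2) * m := by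
    have : 0 ≤ (γ - 1) * m := mul_nonneg (sub_nonneg.mpr hγ) hm
    positivity
  exact div_nonpos_of_nonpos_of_nonneg (neg_nonpos.mpr hnum) hd

theorem total_mach_nonincreasing_general (γ : ℝ) (hγ : 1 < γ) (m₁ m₂ m₁' m₂' : ℝ → ℝ)
    (hm₁ : ∀ r ∈ Set.Ici (1 : ℝ), HasDerivWithinAt m₁ (m₁' r) (Set.Ici 1) r)
    (hm₂ : ∀ r ∈ Set.Ici (1 : ℝ), HasDerivWithinAt m₂ (m₂' r) (Set.Ici 1) r)
    (hm₁nonneg : ∀ r ∈ Set.Ici (1 : ℝ), 0 ≤ m₁ r)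
    (hm₂nonneg : ∀ r ∈ Set.Ici (1 : ℝ), 0 ≤ m₂ r)
    (hm₁lt : ∀ r ∈ Set.Ici (1 : ℝ), m₁ r < 1)
    (hode₁ : ∀ r ∈ Set.Ici (1 : ℝ),
      m₁' r = -((2 * (1 + m₂ r) + (γ - 1) * (m₁ r + m₂ r)) * m₁ r) / (r * (1 - m₁ r)))
    (hode₂ : ∀ r ∈ Set.Ici (1 : ℝ),
      m₂' r = -((2 * (1 - m₁ r) + (γ - 1) * (m₁ r + m₂ r)) * m₂ r) / (r * (1 - m₁ r))) :
    (∀ r ∈ Set.Ici (1 : ℝ),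
      m₁' r + m₂' r
        = -(((γ - 1) * (m₁ r + m₂ r) + 2) * (m₁ r + m₂ r)) / (r * (1 - m₁ r)) ∧
      m₁' r + m₂' r ≤ 0) ∧
    AntitoneOn (fun r => m₁ r + m₂ r) (Set.Ici 1) ∧
    (m₁ 1 + m₂ 1 < 1 → ∀ r ∈ Set.Ici (1 : ℝ), m₁ r + m₂ r < 1) := by
  have hsum : ∀ r ∈ Ici (1 : ℝ), m₁' r + m₂' r
      = -(((γ - 1) * (m₁ r + m₂ r) + 2) * (m₁ r + m₂ r)) / (r * (1 - m₁ r)) := fun r hr => by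
    rw [hode₁ r hr, hode₂ r hr, mach_rhs_add]
  have hnonpos : ∀ r ∈ Ici (1 : ℝ), m₁' r + m₂' r ≤ 0 := fun r hr => by
    have hden : 0 ≤ r * (1 - m₁ r) :=
      mul_nonneg (zero_le_one.trans hr) (sub_nonneg.mpr (hm₁lt r hr).le)
    rw [hsum r hr]
    exact total_mach_rhs_nonpos hγ.le (add_nonneg (hm₁nonneg r hr) (hm₂nonneg r hr)) hden
  have hanti : AntitoneOn (fun r => m₁ r + m₂ r) (Ici 1) :=
    antitoneOn_of_hasDerivWithinAt_nonpos_of_mem (convex_Ici 1)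
      (fun r hr => (hm₁ r hr).add (hm₂ r hr)) hnonpos
  exact ⟨fun r hr => ⟨hsum r hr, hnonpos r hr⟩, hanti,
    fun h₁ r hr => (hanti self_mem_Ici hr hr).trans_lt h₁⟩

/-- Let `γ > 1` and let `m₁, m₂ ∈ C¹([1,∞))` be nonnegative with
`m₁ < 1`, solving the Mach-number ODE system
`m₁′ = −(2(1+m₂)+(γ−1)(m₁+m₂))m₁/(r(1−m₁))`,
`m₂′ = −(2(1−m₁)+(γ−1)(m₁+m₂))m₂/(r(1−m₁))` on `[1,∞)`.  Then `m = m₁+m₂` satisfies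
`m′ = −((γ−1)m+2)m/(r(1−m₁)) ≤ 0`, hence `m` is nonincreasing; in particular if
`m₁(1)+m₂(1) < 1` (subsonic at `r = 1`) then `m₁(r)+m₂(r) < 1` for all `r ≥ 1`
(the flow is uniformly subsonic). -/
theorem total_mach_nonincreasing (γ : ℝ) (hγ : 1 < γ) (m₁ m₂ m₁' m₂' : ℝ → ℝ)
    (hm₁ : ∀ r ∈ Set.Ici (1 : ℝ), HasDerivWithinAt m₁ (m₁' r) (Set.Ici 1) r)
    (hm₂ : ∀ r ∈ Set.Ici (1 : ℝ), HasDerivWithinAt m₂ (m₂' r) (Set.Ici 1) r)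
    (hm₁' : ContinuousOn m₁' (Set.Ici 1)) (hm₂' : ContinuousOn m₂' (Set.Ici 1))
    (hm₁nonneg : ∀ r ∈ Set.Ici (1 : ℝ), 0 ≤ m₁ r)
    (hm₂nonneg : ∀ r ∈ Set.Ici (1 : ℝ), 0 ≤ m₂ r)
    (hm₁lt : ∀ r ∈ Set.Ici (1 : ℝ), m₁ r < 1)
    (hode₁ : ∀ r ∈ Set.Ici (1 : ℝ),
      m₁' r = -((2 * (1 + m₂ r) + (γ - 1) * (m₁ r + m₂ r)) * m₁ r) / (r * (1 - m₁ r)))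
    (hode₂ : ∀ r ∈ Set.Ici (1 : ℝ),
      m₂' r = -((2 * (1 - m₁ r) + (γ - 1) * (m₁ r + m₂ r)) * m₂ r) / (r * (1 - m₁ r))) :
    (∀ r ∈ Set.Ici (1 : ℝ),
      m₁' r + m₂' r
        = -(((γ - 1) * (m₁ r + m₂ r) + 2) * (m₁ r + m₂ r)) / (r * (1 - m₁ r)) ∧
      m₁' r + m₂' r ≤ 0) ∧
    AntitoneOn (fun r => m₁ r + m₂ r) (Set.Ici 1) ∧
    (m₁ 1 + m₂ 1 < 1 → ∀ r ∈ Set.Ici (1 : ℝ), m₁ r + m₂ r < 1) :=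
  total_mach_nonincreasing_general γ hγ m₁ m₂ m₁' m₂' hm₁ hm₂ hm₁nonneg hm₂nonneg hm₁lt hode₁ hode₂
end
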